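/- arXiv:1207.2681 — 2 statements merged into one kernel-verified Lean document; each statement's English description precedes it below -/
import Mathlib

section
/- (Oblique Subspace Pursuit, Step 2.) Let Ψ, Ψ̃ ∈ K^{m×n}, let x* ∈ K^n be s-sparse with support J*, let z ∈ K^m and y = Ψx* + z. Let J̃ ⊆ {1,…,n} with s ≤ |J̃| ≤ 2s, assume θ := θ_{3s}(Ψ̃*Ψ) < 1, and set δ̃ := δ_{2s}(Ψ̃). Let x̃ be the (unique) vector supported on J̃ with Ψ̃_{J̃}*(y − Ψx̃) = 0, and let J₁ ⊆ J̃ with |J₁| = s satisfy min_{j∈J₁}|x̃_j| ≥ max_{j∈J̃\J₁}|x̃_j| (J₁ indexes s largest-magnitude entries of x̃). Then ‖Π_{J*\J₁}x*‖₂ ≤ ((1+θ)/(1−θ))·‖Π_{J*\J̃}x*‖₂ + (2·√(1+δ̃)/(1−θ))·‖z‖₂. -/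
open scoped BigOperators
open Matrix MeasureTheory

noncomputable section

namespace ObliquePursuit

variable {𝕜 : Type*} [RCLike 𝕜]

/-- The Euclidean (`ℓ²`) norm of a finitely indexed vector. -/
def l2 {ι : Type*} [Fintype ι] (x : ι → 𝕜) : ℝ :=
  Real.sqrt (∑ i, ‖x i‖ ^ 2)

/-- The spectral (`ℓ² → ℓ²` operator) norm of a matrix. -/
def specNorm {ι κ : Type*} [Fintype ι] [Fintype κ] [DecidableEq κ]
    (M : Matrix ι κ 𝕜) : ℝ :=
  ‖LinearMap.toContinuousLinearMap (Matrix.toEuclideanLin M)‖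

/-- `x` is `s`-sparse: it has at most `s` nonzero entries. -/
def Sparse {ι : Type*} (s : ℕ) (x : ι → 𝕜) : Prop :=
  ∃ J : Finset ι, J.card ≤ s ∧ ∀ i, x i ≠ 0 → i ∈ J

/-- The `s`-restricted biorthogonality constant `θ_s(M)`: the smallest `δ ≥ 0` such that
`|⟨y, Mx⟩ − ⟨y, x⟩| ≤ δ‖x‖₂‖y‖₂` for all `x, y` supported on a common index set of
cardinality at most `s`. -/
def theta {ι : Type*} [Fintype ι] (s : ℕ) (M : Matrix ι ι 𝕜) : ℝ :=
  sInf {δ : ℝ | 0 ≤ δ ∧ ∀ J : Finset ι, J.card ≤ s →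
    ∀ x y : ι → 𝕜, (∀ i, x i ≠ 0 → i ∈ J) → (∀ i, y i ≠ 0 → i ∈ J) →
      ‖star y ⬝ᵥ M.mulVec x - star y ⬝ᵥ x‖ ≤ δ * l2 x * l2 y}

/-- The `s`-restricted isometry constant `δ_s(Ψ)`. -/
def ric {ι κ : Type*} [Fintype ι] [Fintype κ] (s : ℕ) (Ψ : Matrix ι κ 𝕜) : ℝ :=
  sInf {δ : ℝ | 0 ≤ δ ∧ ∀ x : κ → 𝕜, Sparse s x →
    (1 - δ) * l2 x ^ 2 ≤ l2 (Ψ.mulVec x) ^ 2 ∧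
      l2 (Ψ.mulVec x) ^ 2 ≤ (1 + δ) * l2 x ^ 2}

/-- Coordinate projection `Π_J`: keep the entries indexed by `J`, zero out the others. -/
def proj {ι : Type*} [DecidableEq ι] (J : Finset ι) (x : ι → 𝕜) : ι → 𝕜 :=
  fun i => if i ∈ J then x i else 0

/-- The column submatrix `Ψ_J` of `Ψ` formed by the columns indexed by `J`. -/
def cols {ι κ : Type*} (Ψ : Matrix ι κ 𝕜) (J : Finset κ) :
    Matrix ι {j // j ∈ J} 𝕜 :=
  Ψ.submatrix id fun j => (j : κ)

/-- The `j`-th column of `Ψ`. -/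
def col {ι κ : Type*} (Ψ : Matrix ι κ 𝕜) (j : κ) : ι → 𝕜 :=
  fun i => Ψ i j

/-- The complementary oblique projector `E = I − Ψ_J (Ψ̃_J^* Ψ_J)⁻¹ Ψ̃_J^*`
(equal to `I` when `J = ∅`). -/
def obliqueE {ι κ : Type*} [Fintype ι] [DecidableEq ι] [DecidableEq κ]
    (Ψ Ψt : Matrix ι κ 𝕜) (J : Finset κ) : Matrix ι ι 𝕜 :=
  1 - cols Ψ J * ((cols Ψt J)ᴴ * cols Ψ J)⁻¹ * (cols Ψt J)ᴴ

/-- The smallest (real) eigenvalue of a matrix. -/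
def lamMin {ι : Type*} [Fintype ι] (G : Matrix ι ι 𝕜) : ℝ :=
  sInf {r : ℝ | ∃ v : ι → 𝕜, v ≠ 0 ∧ G.mulVec v = (r : 𝕜) • v}

/-- The `j`-th largest singular value (1-indexed) of a matrix, characterized via the
Eckart–Young–Mirsky theorem: `σ_j(A) = min { ‖A − B‖ : rank B < j }` where `‖·‖` is the
spectral norm. -/
def singVal {ι κ : Type*} [Fintype ι] [Fintype κ] [DecidableEq κ]
    (A : Matrix ι κ 𝕜) (j : ℕ) : ℝ :=
  sInf {r : ℝ | ∃ B : Matrix ι κ 𝕜, B.rank < j ∧ r = specNorm (A - B)}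

/-!
Write `d = x* − x̃` and `w = Π_{J̃} d`. Because the residual `y − Ψx̃` is orthogonal to the columns
of `Ψ̃` indexed by `J̃`, `⟨w, Ψ̃*Ψ d⟩ = −⟨Ψ̃w, z⟩`, while `⟨w, d⟩ = ‖w‖²`. As `d` lives on
`J̃ ∪ J*` (at most `3s` indices), biorthogonality gives `‖w‖² ≤ θ‖d‖‖w‖ + √(1+δ̃)‖w‖‖z‖`, and
`‖d‖ ≤ ‖w‖ + ‖Π_{J*\J̃}x*‖` turns this into `(1−θ)‖w‖ ≤ θ‖Π_{J*\J̃}x*‖ + √(1+δ̃)‖z‖`.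
On `J̃ \ J₁` the vector `x*` is within `w` of `x̃`, and by the selection rule `x̃` there is
dominated by `x̃ = −w` on the at least as many indices of `J₁ \ J*`; hence
`‖Π_{J*\J₁}x*‖ ≤ ‖Π_{J*\J̃}x*‖ + 2‖w‖`.
-/

theorem sum_le_sum_of_card_le_of_forall_le {α M : Type*} [AddCommMonoid M] [LinearOrder M]
    [IsOrderedAddMonoid M] {A B : Finset α} {f : α → M} (hf : ∀ b ∈ B, 0 ≤ f b)
    (hcard : A.card ≤ B.card) (h : ∀ a ∈ A, ∀ b ∈ B, f a ≤ f b) :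
    ∑ a ∈ A, f a ≤ ∑ b ∈ B, f b := by
  rcases B.eq_empty_or_nonempty with rfl | hB
  · simp [Finset.card_eq_zero.1 (Nat.le_zero.1 hcard)]
  obtain ⟨b₀, hb₀, hmin⟩ := B.exists_min_image f hB
  calc ∑ a ∈ A, f a ≤ A.card • f b₀ := Finset.sum_le_card_nsmul _ _ _ fun a ha => h a ha b₀ hb₀
    _ ≤ B.card • f b₀ := nsmul_le_nsmul_left (hf b₀ hb₀) hcard
    _ ≤ ∑ b ∈ B, f b := Finset.card_nsmul_le_sum _ _ _ hmin

section L2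

variable {ι κ : Type*} [Fintype ι] [Fintype κ]

lemma l2_eq_norm (x : ι → 𝕜) : l2 x = ‖WithLp.toLp 2 x‖ :=
  (EuclideanSpace.norm_eq _).symm

lemma l2_nonneg (x : ι → 𝕜) : 0 ≤ l2 x := Real.sqrt_nonneg _

lemma l2_sq (x : ι → 𝕜) : l2 x ^ 2 = ∑ i, ‖x i‖ ^ 2 :=
  Real.sq_sqrt (Finset.sum_nonneg fun _ _ => sq_nonneg _)

lemma l2_add_le (x y : ι → 𝕜) : l2 (x + y) ≤ l2 x + l2 y := by
  simpa only [l2_eq_norm, WithLp.toLp_add] using norm_add_le (WithLp.toLp 2 x) (WithLp.toLp 2 y)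

lemma l2_le_l2_of_norm_le {x y : ι → 𝕜} (h : ∀ i, ‖x i‖ ≤ ‖y i‖) : l2 x ≤ l2 y :=
  Real.sqrt_le_sqrt <| Finset.sum_le_sum fun i _ => pow_le_pow_left₀ (norm_nonneg _) (h i) 2

lemma norm_star_dotProduct_le (x y : ι → 𝕜) : ‖star y ⬝ᵥ x‖ ≤ l2 y * l2 x := by
  have h : star y ⬝ᵥ x = inner 𝕜 (WithLp.toLp 2 y) (WithLp.toLp 2 x) := by
    simp [dotProduct, PiLp.inner_apply, RCLike.inner_apply, mul_comm]
  rw [h, l2_eq_norm, l2_eq_norm]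
  exact norm_inner_le_norm _ _

lemma l2_mulVec_le [DecidableEq κ] (M : Matrix ι κ 𝕜) (x : κ → 𝕜) :
    l2 (M *ᵥ x) ≤ specNorm M * l2 x := by
  rw [l2_eq_norm, l2_eq_norm]
  exact (LinearMap.toContinuousLinearMap (Matrix.toEuclideanLin M)).le_opNorm _

end L2

section Proj

variable {ι : Type*} [DecidableEq ι]

lemma sub_eq_proj_add_proj_sdiff {S J : Finset ι} {x x' : ι → 𝕜}
    (hx : ∀ i, x i ≠ 0 → i ∈ S) (hx' : ∀ i, x' i ≠ 0 → i ∈ J) :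
    x - x' = proj J (x - x') + proj (S \ J) x := by
  funext i
  by_cases hJ : i ∈ J
  · simp [proj, hJ]
  · have h' : x' i = 0 := by_contra fun h => hJ (hx' i h)
    by_cases hS : i ∈ S
    · simp [proj, hJ, hS, h']
    · simp [proj, hJ, hS, h', not_imp_comm.1 (hx i) hS]

variable [Fintype ι]

lemma l2_proj_sq (J : Finset ι) (x : ι → 𝕜) : l2 (proj J x) ^ 2 = ∑ i ∈ J, ‖x i‖ ^ 2 := by
  rw [l2_sq]
  simp [proj, apply_ite (fun t : 𝕜 => ‖t‖ ^ 2), Finset.sum_ite_mem]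

lemma l2_proj_le_l2_proj_of_subset {A B : Finset ι} (h : A ⊆ B) (x : ι → 𝕜) :
    l2 (proj A x) ≤ l2 (proj B x) :=
  l2_le_l2_of_norm_le fun i => by
    by_cases hA : i ∈ A
    · simp [proj, hA, h hA]
    · simp [proj, hA]

lemma star_proj_dotProduct_self (J : Finset ι) (x : ι → 𝕜) :
    star (proj J x) ⬝ᵥ x = ((l2 (proj J x) ^ 2 : ℝ) : 𝕜) := by
  rw [l2_sq]
  push_cast
  refine Finset.sum_congr rfl fun i _ => ?_
  by_cases hi : i ∈ J <;> simp [proj, hi, RCLike.conj_mul]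

lemma l2_proj_le_l2_proj_of_card_le {A B : Finset ι} {x : ι → 𝕜} (hcard : A.card ≤ B.card)
    (h : ∀ a ∈ A, ∀ b ∈ B, ‖x a‖ ≤ ‖x b‖) :
    l2 (proj A x) ≤ l2 (proj B x) := by
  refine (pow_le_pow_iff_left₀ (l2_nonneg _) (l2_nonneg _) two_ne_zero).1 ?_
  rw [l2_proj_sq, l2_proj_sq]
  exact sum_le_sum_of_card_le_of_forall_le (fun _ _ => sq_nonneg _) hcard
    fun a ha b hb => pow_le_pow_left₀ (norm_nonneg _) (h a ha b hb) 2

lemma l2_proj_sdiff_le_of_selected {S J J₁ : Finset ι} {x x' : ι → 𝕜}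
    (hx : ∀ i, x i ≠ 0 → i ∈ S) (hJ₁ : J₁ ⊆ J) (hcard : S.card ≤ J₁.card)
    (hsel : ∀ j ∈ J₁, ∀ l ∈ J \ J₁, ‖x' l‖ ≤ ‖x' j‖) :
    l2 (proj (S \ J₁) x) ≤ l2 (proj (S \ J) x) + 2 * l2 (proj J (x - x')) := by
  set A := (S ∩ J) \ J₁
  set B := J₁ \ S
  have hsplit : proj (S \ J₁) x = proj A (x - x') + proj A x' + proj (S \ J) x := by
    funext i
    by_cases h₁ : i ∈ J₁
    · simp [proj, A, h₁, hJ₁ h₁]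
    · by_cases hS : i ∈ S <;> by_cases hJ : i ∈ J <;> simp [proj, A, hS, hJ, h₁]
  have hAB : l2 (proj A x') ≤ l2 (proj B x') := by
    refine l2_proj_le_l2_proj_of_card_le ?_ fun a ha b hb => ?_
    · calc A.card ≤ (S \ J₁).card :=
            Finset.card_le_card (Finset.sdiff_subset_sdiff Finset.inter_subset_left le_rfl)
        _ ≤ B.card := Finset.card_sdiff_le_card_sdiff_iff.2 hcard
    · simp only [A, B, Finset.mem_sdiff, Finset.mem_inter] at ha hb
      exact hsel b hb.1 a (Finset.mem_sdiff.2 ⟨ha.1.2, ha.2⟩)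
  have hB : l2 (proj B x') ≤ l2 (proj J (x - x')) := by
    refine l2_le_l2_of_norm_le fun i => ?_
    by_cases hi : i ∈ B
    · obtain ⟨h₁, hS⟩ := Finset.mem_sdiff.1 hi
      simp [proj, hi, hJ₁ h₁, not_imp_comm.1 (hx i) hS]
    · simp [proj, hi]
  calc l2 (proj (S \ J₁) x)
      ≤ l2 (proj A (x - x')) + l2 (proj A x') + l2 (proj (S \ J) x) := by
        rw [hsplit]
        exact (l2_add_le _ _).trans (add_le_add_left (l2_add_le _ _) _)
    _ ≤ l2 (proj J (x - x')) + l2 (proj J (x - x')) + l2 (proj (S \ J) x) := by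
        gcongr
        · exact l2_proj_le_l2_proj_of_subset
            (Finset.sdiff_subset.trans Finset.inter_subset_right) _
        · exact hAB.trans hB
    _ = _ := by ring

end Proj

section RestrictedConstants

variable {ι κ : Type*} [Fintype ι] [Fintype κ]

lemma le_sInf_mul {S : Set ℝ} (hS : S.Nonempty) {a c : ℝ} (hc : 0 ≤ c)
    (h : ∀ δ ∈ S, a ≤ δ * c) : a ≤ sInf S * c := by
  rcases hc.eq_or_lt with rfl | hc
  · obtain ⟨δ, hδ⟩ := hS
    simpa using h δ hδ
  · exact (div_le_iff₀ hc).1 <| le_csInf hS fun δ hδ => (div_le_iff₀ hc).2 (h δ hδ)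

lemma theta_nonneg (s : ℕ) (M : Matrix ι ι 𝕜) : 0 ≤ theta s M :=
  Real.sInf_nonneg fun _ hδ => hδ.1

lemma norm_sub_le_theta (s : ℕ) (M : Matrix ι ι 𝕜) {J : Finset ι} (hJ : J.card ≤ s)
    {x y : ι → 𝕜} (hx : ∀ i, x i ≠ 0 → i ∈ J) (hy : ∀ i, y i ≠ 0 → i ∈ J) :
    ‖star y ⬝ᵥ M *ᵥ x - star y ⬝ᵥ x‖ ≤ theta s M * l2 x * l2 y := by
  classical
  -- `sInf ∅ = 0`, so the infimum has to be shown to range over a nonempty set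
  have hne : ∃ δ, 0 ≤ δ ∧ ∀ J : Finset ι, J.card ≤ s → ∀ x y : ι → 𝕜,
      (∀ i, x i ≠ 0 → i ∈ J) → (∀ i, y i ≠ 0 → i ∈ J) →
        ‖star y ⬝ᵥ M *ᵥ x - star y ⬝ᵥ x‖ ≤ δ * l2 x * l2 y := by
    refine ⟨specNorm M + 1, by unfold specNorm; positivity, fun _ _ x y _ _ => ?_⟩
    calc ‖star y ⬝ᵥ M *ᵥ x - star y ⬝ᵥ x‖ ≤ l2 y * l2 (M *ᵥ x) + l2 y * l2 x :=
          (norm_sub_le _ _).trans (add_le_add (norm_star_dotProduct_le _ _)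
            (norm_star_dotProduct_le _ _))
      _ ≤ l2 y * (specNorm M * l2 x) + l2 y * l2 x := by
          gcongr
          · exact l2_nonneg _
          · exact l2_mulVec_le M x
      _ = (specNorm M + 1) * l2 x * l2 y := by ring
  rw [mul_assoc]
  exact le_sInf_mul hne (mul_nonneg (l2_nonneg x) (l2_nonneg y))
    fun δ hδ => by rw [← mul_assoc]; exact hδ.2 J hJ x y hx hy

lemma ric_nonneg (s : ℕ) (Ψ : Matrix ι κ 𝕜) : 0 ≤ ric s Ψ :=
  Real.sInf_nonneg fun _ hδ => hδ.1

lemma l2_mulVec_le_of_sparse {s : ℕ} (Ψ : Matrix ι κ 𝕜) {x : κ → 𝕜}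
    (hx : Sparse s x) :
    l2 (Ψ *ᵥ x) ≤ Real.sqrt (1 + ric s Ψ) * l2 x := by
  classical
  have hne : ∃ δ, 0 ≤ δ ∧ ∀ x : κ → 𝕜, Sparse s x →
      (1 - δ) * l2 x ^ 2 ≤ l2 (Ψ *ᵥ x) ^ 2 ∧
        l2 (Ψ *ᵥ x) ^ 2 ≤ (1 + δ) * l2 x ^ 2 := by
    refine ⟨specNorm Ψ ^ 2 + 1, by positivity, fun x _ => ⟨?_, ?_⟩⟩
    · nlinarith [sq_nonneg (l2 x), sq_nonneg (l2 (Ψ *ᵥ x)), sq_nonneg (specNorm Ψ * l2 x)]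
    · have h := pow_le_pow_left₀ (l2_nonneg _) (l2_mulVec_le Ψ x) 2
      nlinarith [sq_nonneg (l2 x)]
  have hsq : l2 (Ψ *ᵥ x) ^ 2 - l2 x ^ 2 ≤ ric s Ψ * l2 x ^ 2 :=
    le_sInf_mul hne (sq_nonneg _) fun δ hδ => by linarith [(hδ.2 x hx).2]
  rw [← Real.sqrt_sq (l2_nonneg (Ψ *ᵥ x)), ← Real.sqrt_sq (l2_nonneg x), ← Real.sqrt_mul
    (by linarith [ric_nonneg s Ψ])]
  exact Real.sqrt_le_sqrt (by linarith)

end RestrictedConstants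

section Oblique

variable {ι κ : Type*} [Fintype ι] [Fintype κ]

lemma star_mulVec_dotProduct_eq_zero (Ψ : Matrix ι κ 𝕜) {J : Finset κ} {r : ι → 𝕜}
    (horth : ∀ j ∈ J, star (col Ψ j) ⬝ᵥ r = 0) {w : κ → 𝕜} (hw : ∀ j, w j ≠ 0 → j ∈ J) :
    star (Ψ *ᵥ w) ⬝ᵥ r = 0 := by
  rw [star_mulVec, ← dotProduct_mulVec]
  refine Finset.sum_eq_zero fun j _ => ?_
  by_cases hj : j ∈ J
  · have h : (Ψᴴ *ᵥ r) j = star (col Ψ j) ⬝ᵥ r := rfl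
    rw [h, horth j hj, mul_zero]
  · simp [not_imp_comm.1 (hw j) hj]

variable [DecidableEq κ]

lemma l2_proj_sq_le_of_orthogonal {t r : ℕ} (Ψ Ψt : Matrix ι κ 𝕜) {J T : Finset κ}
    (hJT : J ⊆ T) (hT : T.card ≤ t) (hJ : J.card ≤ r) {d : κ → 𝕜}
    (hd : ∀ i, d i ≠ 0 → i ∈ T) (z : ι → 𝕜)
    (horth : ∀ j ∈ J, star (col Ψt j) ⬝ᵥ (Ψ *ᵥ d + z) = 0) :
    l2 (proj J d) ^ 2 ≤ theta t (Ψtᴴ * Ψ) * l2 d * l2 (proj J d) +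
      Real.sqrt (1 + ric r Ψt) * l2 (proj J d) * l2 z := by
  set w := proj J d
  have hw : ∀ i, w i ≠ 0 → i ∈ J := fun i hi => by
    by_contra h
    exact hi (if_neg h)
  have hbiorth :
      ‖star w ⬝ᵥ d - star w ⬝ᵥ (Ψtᴴ * Ψ) *ᵥ d‖ ≤ theta t (Ψtᴴ * Ψ) * l2 d * l2 w := by
    rw [norm_sub_rev]
    exact norm_sub_le_theta t _ hT hd fun i hi => hJT (hw i hi)
  have hnoise :
      ‖star w ⬝ᵥ (Ψtᴴ * Ψ) *ᵥ d‖ ≤ Real.sqrt (1 + ric r Ψt) * l2 w * l2 z := by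
    have h : star w ⬝ᵥ (Ψtᴴ * Ψ) *ᵥ d = -(star (Ψt *ᵥ w) ⬝ᵥ z) := by
      rw [← mulVec_mulVec, dotProduct_mulVec, ← star_mulVec, eq_neg_iff_add_eq_zero,
        ← dotProduct_add]
      exact star_mulVec_dotProduct_eq_zero Ψt horth hw
    rw [h, norm_neg]
    exact (norm_star_dotProduct_le _ _).trans <| mul_le_mul_of_nonneg_right
      (l2_mulVec_le_of_sparse Ψt ⟨J, hJ, hw⟩) (l2_nonneg z)
  calc l2 w ^ 2 = ‖star w ⬝ᵥ d‖ := by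
        rw [star_proj_dotProduct_self, RCLike.norm_ofReal, abs_of_nonneg (sq_nonneg _)]
    _ ≤ ‖star w ⬝ᵥ d - star w ⬝ᵥ (Ψtᴴ * Ψ) *ᵥ d‖ + ‖star w ⬝ᵥ (Ψtᴴ * Ψ) *ᵥ d‖ :=
        norm_le_norm_sub_add _ _
    _ ≤ _ := add_le_add hbiorth hnoise

lemma one_sub_theta_mul_l2_proj_le_of_orthogonal {t r : ℕ} (Ψ Ψt : Matrix ι κ 𝕜)
    {J T : Finset κ} (hJT : J ⊆ T) (hT : T.card ≤ t) (hJ : J.card ≤ r) {d : κ → 𝕜}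
    (hd : ∀ i, d i ≠ 0 → i ∈ T) (z : ι → 𝕜)
    (horth : ∀ j ∈ J, star (col Ψt j) ⬝ᵥ (Ψ *ᵥ d + z) = 0) :
    (1 - theta t (Ψtᴴ * Ψ)) * l2 (proj J d) ≤
      theta t (Ψtᴴ * Ψ) * l2 (d - proj J d) + Real.sqrt (1 + ric r Ψt) * l2 z := by
  set θ := theta t (Ψtᴴ * Ψ)
  set W := l2 (proj J d)
  have hsq : W ^ 2 ≤ θ * l2 d * W + Real.sqrt (1 + ric r Ψt) * W * l2 z :=
    l2_proj_sq_le_of_orthogonal Ψ Ψt hJT hT hJ hd z horth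
  have hsplit : l2 d ≤ W + l2 (d - proj J d) := by
    simpa using l2_add_le (proj J d) (d - proj J d)
  have hθ : 0 ≤ θ := theta_nonneg _ _
  have hW : 0 ≤ W := l2_nonneg _
  have hnoise : 0 ≤ Real.sqrt (1 + ric r Ψt) * l2 z :=
    mul_nonneg (Real.sqrt_nonneg _) (l2_nonneg z)
  rcases hW.eq_or_lt with hW0 | hWpos
  · rw [← hW0, mul_zero]
    exact add_nonneg (mul_nonneg hθ (l2_nonneg _)) hnoise
  refine le_of_mul_le_mul_left ?_ hWpos
  nlinarith [mul_le_mul_of_nonneg_right hsplit (mul_nonneg hθ hW)]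

end Oblique

theorem statement11_general (m n s : ℕ) (Ψ Ψt : Matrix (Fin m) (Fin n) 𝕜)
    (xstar : Fin n → 𝕜) (Jstar : Finset (Fin n))
    (hsupp : ∀ i, xstar i ≠ 0 ↔ i ∈ Jstar) (hcard : Jstar.card ≤ s)
    (z y : Fin m → 𝕜) (hy : y = Ψ.mulVec xstar + z)
    (Jtil : Finset (Fin n)) (hJtil2 : Jtil.card ≤ 2 * s)
    (θ : ℝ) (hθdef : θ = theta (3 * s) (Ψtᴴ * Ψ)) (hθ : θ < 1)
    (xtil : Fin n → 𝕜) (hxtilsupp : ∀ i, xtil i ≠ 0 → i ∈ Jtil)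
    (hxtilorth : ∀ j ∈ Jtil, star (col Ψt j) ⬝ᵥ (y - Ψ.mulVec xtil) = 0)
    (J₁ : Finset (Fin n)) (hJ₁sub : J₁ ⊆ Jtil) (hJ₁ : J₁.card = s)
    (hsel : ∀ j ∈ J₁, ∀ l ∈ Jtil \ J₁, ‖xtil l‖ ≤ ‖xtil j‖) :
    l2 (proj (Jstar \ J₁) xstar) ≤
      (1 + θ) / (1 - θ) * l2 (proj (Jstar \ Jtil) xstar) +
        2 * Real.sqrt (1 + ric (2 * s) Ψt) / (1 - θ) * l2 z := by
  have hxstar : ∀ i, xstar i ≠ 0 → i ∈ Jstar := fun i => (hsupp i).1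
  have hd : ∀ i, (xstar - xtil) i ≠ 0 → i ∈ Jtil ∪ Jstar := fun i hi => by
    by_contra h
    simp only [Finset.mem_union, not_or] at h
    exact hi (by simp [not_imp_comm.1 (hxstar i) h.2, not_imp_comm.1 (hxtilsupp i) h.1])
  have hresidual : y - Ψ *ᵥ xtil = Ψ *ᵥ (xstar - xtil) + z := by
    rw [hy, mulVec_sub]
    abel
  have hT : (Jtil ∪ Jstar).card ≤ 3 * s := (Finset.card_union_le _ _).trans (by omega)
  have herr := one_sub_theta_mul_l2_proj_le_of_orthogonal Ψ Ψt Finset.subset_union_left hT hJtil2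
    hd z (hresidual ▸ hxtilorth)
  rw [← hθdef, ← eq_sub_of_add_eq' (sub_eq_proj_add_proj_sdiff hxstar hxtilsupp).symm] at herr
  have hpruned := l2_proj_sdiff_le_of_selected hxstar hJ₁sub (hJ₁ ▸ hcard) hsel
  rw [div_mul_eq_mul_div, div_mul_eq_mul_div, ← add_div, le_div_iff₀ (by linarith)]
  linarith [mul_le_mul_of_nonneg_left hpruned (sub_nonneg.2 hθ.le)]

/-- Oblique Subspace Pursuit, Step 2. -/
theorem statement11 (m n s : ℕ) (Ψ Ψt : Matrix (Fin m) (Fin n) 𝕜)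
    (xstar : Fin n → 𝕜) (Jstar : Finset (Fin n))
    (hsupp : ∀ i, xstar i ≠ 0 ↔ i ∈ Jstar) (hcard : Jstar.card ≤ s)
    (z y : Fin m → 𝕜) (hy : y = Ψ.mulVec xstar + z)
    (Jtil : Finset (Fin n)) (hJtil1 : s ≤ Jtil.card) (hJtil2 : Jtil.card ≤ 2 * s)
    (θ : ℝ) (hθdef : θ = theta (3 * s) (Ψtᴴ * Ψ)) (hθ : θ < 1)
    (xtil : Fin n → 𝕜) (hxtilsupp : ∀ i, xtil i ≠ 0 → i ∈ Jtil)
    (hxtilorth : ∀ j ∈ Jtil, star (col Ψt j) ⬝ᵥ (y - Ψ.mulVec xtil) = 0)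
    (J₁ : Finset (Fin n)) (hJ₁sub : J₁ ⊆ Jtil) (hJ₁ : J₁.card = s)
    (hsel : ∀ j ∈ J₁, ∀ l ∈ Jtil \ J₁, ‖xtil l‖ ≤ ‖xtil j‖) :
    l2 (proj (Jstar \ J₁) xstar) ≤
      (1 + θ) / (1 - θ) * l2 (proj (Jstar \ Jtil) xstar) +
        2 * Real.sqrt (1 + ric (2 * s) Ψt) / (1 - θ) * l2 z :=
  statement11_general m n s Ψ Ψt xstar Jstar hsupp hcard z y hy Jtil hJtil2 θ hθdef hθ xtil
    hxtilsupp hxtilorth J₁ hJ₁sub hJ₁ hsel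
end ObliquePursuit
end
end

section
/- (Singular values of a Schur complement; second assertion of the paper's Lemma A.1.) Let M ∈ K^{n×n} be nonsingular and partition M = [[M₁₁, M₁₂],[M₂₁, M₂₂]] where M₂₂ ∈ K^{q×q} with 0 < q < n is invertible. Let M/M₂₂ = M₁₁ − M₁₂M₂₂⁻¹M₂₁ ∈ K^{(n−q)×(n−q)} denote the Schur complement of the block M₂₂. Then for every j = 1,…,n−q one has σ_j(M/M₂₂) ≥ σ_{j+q}(M), where σ_k(A) denotes the k-th largest singular value of A. -/
/-!
Let `S = A - B D⁻¹ C` be the Schur complement of the pivot block `D` of `M = [A B; C D]`.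
If `E` has rank `< j`, then `M - [S - E, 0; 0, 0] = [E, 0; 0, 0] + [B D⁻¹; 1] [C D]` has rank
`< j + q`, because the second summand factors through `K^q`; and its distance to `M` is
`‖[S - E, 0; 0, 0]‖ ≤ ‖S - E‖`. As `σ_j` is the distance to the matrices of rank `< j`, this
gives `σ_{j+q}(M) ≤ σ_j(S)`.
-/

open scoped BigOperators
open Matrix MeasureTheory

noncomputable section

namespace ObliquePursuit

variable {𝕜 : Type*} [RCLike 𝕜]

lemma Matrix.rank_add_le {K m n : Type*} [Field K] [Fintype n]
    (A B : Matrix m n K) : (A + B).rank ≤ A.rank + B.rank := by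
  rw [Matrix.rank, Matrix.rank, Matrix.rank, Matrix.mulVecLin_add]
  have hrange : LinearMap.range (A.mulVecLin + B.mulVecLin) ≤
      LinearMap.range A.mulVecLin ⊔ LinearMap.range B.mulVecLin := by
    rintro x ⟨y, rfl⟩
    exact Submodule.mem_sup.2 ⟨_, ⟨y, rfl⟩, _, ⟨y, rfl⟩, rfl⟩
  exact (Submodule.finrank_mono hrange).trans
    (Submodule.finrank_add_le_finrank_add_finrank _ _)

lemma Matrix.rank_fromBlocks_zero_le {R m n l o : Type*} [CommRing R] [StrongRankCondition R]
    [Fintype m] [Fintype l] [Fintype o]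
    (A : Matrix m l R) : (fromBlocks A 0 0 (0 : Matrix n o R)).rank ≤ A.rank := by
  classical
  have hfactor : fromBlocks A 0 0 (0 : Matrix n o R) =
      fromRows (1 : Matrix m m R) 0 * (A * fromCols (1 : Matrix l l R) 0) := by
    rw [mul_fromCols, fromRows_mul_fromCols]
    simp
  rw [hfactor]
  exact (rank_mul_le_right _ _).trans (rank_mul_le_left _ _)

lemma Matrix.fromBlocks_sub_fromBlocks_schur {R m n l : Type*} [CommRing R]
    [Fintype n] [DecidableEq n]
    (A : Matrix m l R) (B : Matrix m n R) (C : Matrix n l R) (D : Matrix n n R)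
    (hD : IsUnit D.det) :
    fromBlocks A B C D - fromBlocks (A - B * D⁻¹ * C) 0 0 0 =
      fromRows (B * D⁻¹) 1 * fromCols C D := by
  rw [fromRows_mul_fromCols, nonsing_inv_mul_cancel_right _ _ hD]
  ext (i | i) (k | k) <;> simp

lemma specNorm_fromBlocks_zero_le {m n l o : Type*} [Fintype m] [Fintype n] [Fintype l]
    [Fintype o] [DecidableEq l] [DecidableEq o] (C : Matrix m l 𝕜) :
    specNorm (fromBlocks C 0 0 (0 : Matrix n o 𝕜)) ≤ specNorm C := by
  refine ContinuousLinearMap.opNorm_le_bound _ (norm_nonneg _) fun x => ?_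
  set x₁ : EuclideanSpace 𝕜 l := WithLp.toLp 2 fun i => x (Sum.inl i)
  have hx₁ : ‖x₁‖ ≤ ‖x‖ := by
    rw [EuclideanSpace.norm_eq, EuclideanSpace.norm_eq, Fintype.sum_sum_type]
    exact Real.sqrt_le_sqrt (le_add_of_nonneg_right (by positivity))
  have himage : ‖toEuclideanLin (fromBlocks C 0 0 (0 : Matrix n o 𝕜)) x‖ =
      ‖toEuclideanLin C x₁‖ := by
    rw [EuclideanSpace.norm_eq, EuclideanSpace.norm_eq, Fintype.sum_sum_type]
    simp [fromBlocks_mulVec, x₁, Function.comp_def]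
  calc ‖toEuclideanLin (fromBlocks C 0 0 (0 : Matrix n o 𝕜)) x‖
      = ‖toEuclideanLin C x₁‖ := himage
    _ ≤ specNorm C * ‖x₁‖ := (LinearMap.toContinuousLinearMap (toEuclideanLin C)).le_opNorm x₁
    _ ≤ specNorm C * ‖x‖ := by gcongr; exact norm_nonneg _

lemma singVal_le_specNorm_sub {ι κ : Type*} [Fintype ι] [Fintype κ] [DecidableEq κ]
    {A B : Matrix ι κ 𝕜} {j : ℕ} (hB : B.rank < j) : singVal A j ≤ specNorm (A - B) :=
  csInf_le ⟨0, by rintro r ⟨B, -, rfl⟩; exact norm_nonneg _⟩ ⟨B, hB, rfl⟩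

lemma le_singVal {ι κ : Type*} [Fintype ι] [Fintype κ] [DecidableEq κ]
    {A : Matrix ι κ 𝕜} {j : ℕ} {r : ℝ} (hj : 1 ≤ j)
    (h : ∀ B : Matrix ι κ 𝕜, B.rank < j → r ≤ specNorm (A - B)) : r ≤ singVal A j :=
  le_csInf ⟨_, 0, by rwa [rank_zero], rfl⟩ fun _ ⟨B, hB, hr⟩ => hr ▸ h B hB

lemma rank_sub_fromBlocks_schur_sub_le {K m n l : Type*} [Field K] [Fintype m] [Fintype n]
    [Fintype l] [DecidableEq n] (M : Matrix (m ⊕ n) (l ⊕ n) K)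
    (hD : IsUnit M.toBlocks₂₂.det) (E : Matrix m l K) :
    (M - fromBlocks (M.toBlocks₁₁ - M.toBlocks₁₂ * M.toBlocks₂₂⁻¹ * M.toBlocks₂₁ - E)
      0 0 0).rank ≤ E.rank + Fintype.card n := by
  set S := M.toBlocks₁₁ - M.toBlocks₁₂ * M.toBlocks₂₂⁻¹ * M.toBlocks₂₁
  have hsplit : M - fromBlocks (S - E) 0 0 0 =
      (fromBlocks M.toBlocks₁₁ M.toBlocks₁₂ M.toBlocks₂₁ M.toBlocks₂₂ - fromBlocks S 0 0 0) +
        fromBlocks E 0 0 0 := by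
    have hlin : fromBlocks (S - E) 0 0 (0 : Matrix n n K) =
        fromBlocks S 0 0 0 - fromBlocks E 0 0 0 := by
      ext (i | i) (k | k) <;> simp
    rw [hlin, fromBlocks_toBlocks]
    abel
  rw [hsplit, Matrix.fromBlocks_sub_fromBlocks_schur _ _ _ _ hD, add_comm E.rank]
  exact (Matrix.rank_add_le _ _).trans (add_le_add
    ((rank_mul_le_left _ _).trans (rank_le_card_width _)) (Matrix.rank_fromBlocks_zero_le E))

theorem statement17_general (p q : ℕ)
    (M : Matrix (Fin p ⊕ Fin q) (Fin p ⊕ Fin q) 𝕜)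
    (hM22 : IsUnit M.toBlocks₂₂.det) :
    ∀ j : ℕ, 1 ≤ j → j ≤ p →
      singVal M (j + q) ≤
        singVal (M.toBlocks₁₁ - M.toBlocks₁₂ * M.toBlocks₂₂⁻¹ * M.toBlocks₂₁) j := by
  intro j hj _
  refine le_singVal hj fun E hE => ?_
  have hrank := rank_sub_fromBlocks_schur_sub_le M hM22 E
  rw [Fintype.card_fin] at hrank
  set S := M.toBlocks₁₁ - M.toBlocks₁₂ * M.toBlocks₂₂⁻¹ * M.toBlocks₂₁
  calc singVal M (j + q) ≤ specNorm (M - (M - fromBlocks (S - E) 0 0 0)) :=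
        singVal_le_specNorm_sub (by omega)
    _ = specNorm (fromBlocks (S - E) 0 0 (0 : Matrix (Fin q) (Fin q) 𝕜)) := by rw [sub_sub_cancel]
    _ ≤ specNorm (S - E) := specNorm_fromBlocks_zero_le _

/-- singular values of a Schur complement interlace those of the full
matrix: `σ_j(M/M₂₂) ≥ σ_{j+q}(M)`. -/
theorem statement17 (p q : ℕ) (hp : 0 < p) (hq : 0 < q)
    (M : Matrix (Fin p ⊕ Fin q) (Fin p ⊕ Fin q) 𝕜)
    (hM : IsUnit M.det) (hM22 : IsUnit M.toBlocks₂₂.det) :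
    ∀ j : ℕ, 1 ≤ j → j ≤ p →
      singVal M (j + q) ≤
        singVal (M.toBlocks₁₁ - M.toBlocks₁₂ * M.toBlocks₂₂⁻¹ * M.toBlocks₂₁) j :=
  statement17_general p q M hM22

end ObliquePursuit
end
end
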